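/- arXiv:2505.24735 — 3 statements merged into one kernel-verified Lean document; each statement's English description precedes it below -/
import Mathlib

section
/- Let Y be a symmetric n×n matrix with integer entries. Then Y is positive semidefinite if and only if there exist integer matrices U, V, W and a positive integer k such that Wᵀ(UᵀU + V)W = kY and V is symmetric and diagonally dominant (i.e., for every i, the sum over j ≠ i of |V_{ij}| is at most V_{ii}). -/
/-!
If `V` is symmetric and diagonally dominant, Gershgorin's theorem puts every eigenvalue of `V`
in a disc `|μ - V k k| ≤ ∑_{j ≠ k} |V k j| ≤ V k k`, so `V` is positive semidefinite, and then so
is the congruent matrix `Wᵀ (UᵀU + V) W = kY`.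

Conversely, an integer positive semidefinite matrix has a fraction-free `LDLᵀ` decomposition.
Pivoting on a diagonal entry `a = A i i > 0` with `r` the `i`-th row gives
`a • A = r rᵀ + (a • A - r rᵀ)`, where the Schur complement `a • A - r rᵀ` is again an integer
positive semidefinite matrix and its `i`-th row vanishes; a zero diagonal entry forces its whole
row to vanish. Eliminating the rows one at a time yields `Wᵀ diag(d) W = k • A` with `d ≥ 0`
and `k > 0`, i.e. a certificate with `U = 0` and `V = diag(d)`.
-/

open Matrix

namespace Matrix

variable {ι R : Type*}

theorem transpose_vecCons_mul_diagonal_mul_vecCons [CommSemiring R] {m : ℕ}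
    (r : ι → R) (W : Matrix (Fin m) ι R) (c : R) (d : Fin m → R) :
    (of (vecCons r fun p => W p))ᵀ * diagonal (vecCons c d) * of (vecCons r fun p => W p) =
      c • vecMulVec r r + Wᵀ * diagonal d * W := by
  ext u v
  simp only [mul_apply, diagonal_apply, mul_ite, mul_zero, Finset.sum_ite_eq', Finset.mem_univ,
    if_true, transpose_apply, of_apply, Fin.sum_univ_succ, cons_val_zero, cons_val_succ,
    add_apply, smul_apply, vecMulVec_apply, smul_eq_mul]
  ring

variable [Fintype ι]

theorem IsSymm.posSemidef_of_sum_abs_le [DecidableEq ι] {V : Matrix ι ι ℝ} (hV : V.IsSymm)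
    (hdd : ∀ i, ∑ j ∈ Finset.univ.erase i, |V i j| ≤ V i i) : V.PosSemidef := by
  have hV' : V.IsHermitian := by rw [IsHermitian, conjTranspose_eq_transpose_of_trivial, hV.eq]
  refine hV'.posSemidef_iff_eigenvalues_nonneg.mpr fun i => ?_
  have hμ : Module.End.HasEigenvalue (toLin' V) (hV'.eigenvalues i) := by
    rw [Module.End.hasEigenvalue_iff_mem_spectrum, spectrum_toLin']
    exact hV'.eigenvalues_mem_spectrum_real i
  obtain ⟨k, hk⟩ := eigenvalue_mem_ball hμ
  rw [Metric.mem_closedBall, Real.dist_eq] at hk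
  simp only [Real.norm_eq_abs] at hk
  show (0 : ℝ) ≤ _
  linarith [hdd k, (abs_sub_le_iff.mp hk).2]

theorem PosSemidef.of_map_intCast {A : Matrix ι ι ℤ}
    (hA : (A.map (Int.cast : ℤ → ℝ)).PosSemidef) : A.PosSemidef := by
  refine .of_dotProduct_mulVec_nonneg ?_ fun x => ?_
  · ext i j
    simpa using hA.isHermitian.apply i j
  · have hx := hA.dotProduct_mulVec_nonneg (Int.cast ∘ x)
    have hcast : ((x ⬝ᵥ A *ᵥ x : ℤ) : ℝ) = (Int.cast ∘ x) ⬝ᵥ A.map Int.cast *ᵥ (Int.cast ∘ x) := by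
      simp [dotProduct, mulVec]
    rw [star_trivial, ← hcast] at hx
    exact_mod_cast hx

theorem PosSemidef.smul_sub_vecMulVec [DecidableEq ι] [CommRing R] [LinearOrder R]
    [IsStrictOrderedRing R] [StarRing R] [TrivialStar R] {A : Matrix ι ι R} (hA : A.PosSemidef)
    {i : ι} (hi : 0 < A i i) : (A i i • A - vecMulVec (A i) (A i)).PosSemidef := by
  have hsymm : ∀ j k, A k j = A j k := fun j k => by simpa using hA.isHermitian.apply j k
  refine .of_dotProduct_mulVec_nonneg ?_ fun x => ?_
  · ext j k
    simp [vecMulVec_apply, hsymm j k, mul_comm]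
  · set s := A i ⬝ᵥ x
    have hcol : x ⬝ᵥ A.col i = s := by
      rw [dotProduct_comm]; congr 1; ext j; exact hsymm i j
    have hrow : (A *ᵥ x) i = s := rfl
    -- `y = A i i • x - s • eᵢ` has `yᵀ A y = A i i * xᵀ (A i i • A - A i (A i)ᵀ) x`.
    have hx := hA.dotProduct_mulVec_nonneg (A i i • x - Pi.single i s)
    simp only [star_trivial, mulVec_sub, mulVec_smul, sub_dotProduct, dotProduct_sub,
      smul_dotProduct, dotProduct_smul, mulVec_single, single_dotProduct, smul_eq_mul,
      MulOpposite.smul_eq_mul_unop, MulOpposite.unop_op, hcol, hrow, col_apply] at hx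
    simp only [star_trivial, sub_mulVec, smul_mulVec, vecMulVec_mulVec, dotProduct_sub,
      dotProduct_smul, smul_eq_mul, MulOpposite.smul_eq_mul_unop, MulOpposite.unop_op,
      dotProduct_comm x (A i)]
    refine nonneg_of_mul_nonneg_right (a := A i i) ?_ hi
    linear_combination hx

theorem PosSemidef.row_eq_zero_of_diag_eq_zero [DecidableEq ι] {A : Matrix ι ι ℤ}
    (hA : A.PosSemidef) {i : ι} (hi : A i i = 0) : A i = 0 := by
  ext j
  change A i j = 0
  have hji : A j i = A i j := by simpa using hA.isHermitian.apply i j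
  -- the form at `t eᵢ + eⱼ` is `2 t A i j + A j j`, negative at `t = -(A j j + 1) A i j ≠ 0`
  have hx := hA.dotProduct_mulVec_nonneg (Pi.single i (-(A j j + 1) * A i j) + Pi.single j 1)
  simp only [star_trivial, mulVec_add, add_dotProduct, dotProduct_add, mulVec_single,
    single_dotProduct, Pi.smul_apply, col_apply, MulOpposite.smul_eq_mul_unop,
    MulOpposite.unop_op, hi, hji] at hx
  have hd : 0 ≤ A j j := hA.diag_nonneg
  by_contra h
  have hsq : 1 ≤ A i j ^ 2 := by nlinarith [Int.one_le_abs h, sq_abs (A i j)]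
  nlinarith [mul_le_mul_of_nonneg_left hsq (by linarith : 0 ≤ A j j + 1)]

theorem PosSemidef.exists_transpose_mul_diagonal_mul_eq_smul_of_rows_eq_zero [DecidableEq ι]
    (s : Finset ι) {A : Matrix ι ι ℤ} (hA : A.PosSemidef) (hA0 : ∀ i ∉ s, A i = 0) :
    ∃ (m : ℕ) (W : Matrix (Fin m) ι ℤ) (d : Fin m → ℤ) (k : ℤ),
      0 < k ∧ 0 ≤ d ∧ Wᵀ * diagonal d * W = k • A := by
  induction s using Finset.induction_on generalizing A with
  | empty =>
    have : A = 0 := funext fun i => hA0 i (Finset.notMem_empty i)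
    exact ⟨0, 0, 0, 1, one_pos, le_rfl, by simp [this]⟩
  | insert i t hit ih =>
    rcases hA.diag_nonneg.eq_or_lt with hii | hii
    · refine ih hA fun j hj => ?_
      obtain rfl | hji := eq_or_ne j i
      · exact hA.row_eq_zero_of_diag_eq_zero hii.symm
      · exact hA0 j (by simp [hji, hj])
    · have hS0 : ∀ j ∉ t, (A i i • A - vecMulVec (A i) (A i)) j = 0 := by
        intro j hj
        ext l
        obtain rfl | hji := eq_or_ne j i
        · simp only [sub_apply, smul_apply, smul_eq_mul, vecMulVec_apply, Pi.zero_apply]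
          ring
        · have hAj : A j = 0 := hA0 j (by simp [hji, hj])
          have hAij : A i j = 0 := by simpa [hAj] using hA.isHermitian.apply j i
          simp only [sub_apply, smul_apply, smul_eq_mul, vecMulVec_apply, Pi.zero_apply, hAij,
            congrFun hAj l, mul_zero, zero_mul, sub_zero]
      obtain ⟨m, W, d, k, hk, hd, hW⟩ := ih (hA.smul_sub_vecMulVec hii) hS0
      refine ⟨m + 1, of (vecCons (A i) fun p => W p), vecCons k d, k * A i i, mul_pos hk hii,
        ?_, ?_⟩
      · intro p
        cases p using Fin.cases with
        | zero => exact hk.le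
        | succ p => exact hd p
      · rw [transpose_vecCons_mul_diagonal_mul_vecCons, hW, smul_sub, smul_smul]
        abel

theorem PosSemidef.exists_transpose_mul_diagonal_mul_eq_smul [DecidableEq ι]
    {A : Matrix ι ι ℤ} (hA : A.PosSemidef) :
    ∃ (m : ℕ) (W : Matrix (Fin m) ι ℤ) (d : Fin m → ℤ) (k : ℤ),
      0 < k ∧ 0 ≤ d ∧ Wᵀ * diagonal d * W = k • A :=
  hA.exists_transpose_mul_diagonal_mul_eq_smul_of_rows_eq_zero .univ fun i hi =>
    absurd (Finset.mem_univ i) hi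

end Matrix

theorem stmt_0_general (n : ℕ) (Y : Matrix (Fin n) (Fin n) ℝ)
    (hint : ∀ i j, ∃ z : ℤ, Y i j = (z : ℝ)) :
    Y.PosSemidef ↔
      ∃ (m p : ℕ) (U : Matrix (Fin p) (Fin m) ℝ) (V : Matrix (Fin m) (Fin m) ℝ)
        (W : Matrix (Fin m) (Fin n) ℝ) (k : ℕ),
        0 < k ∧
        (∀ i j, ∃ z : ℤ, U i j = (z : ℝ)) ∧
        (∀ i j, ∃ z : ℤ, V i j = (z : ℝ)) ∧
        (∀ i j, ∃ z : ℤ, W i j = (z : ℝ)) ∧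
        Wᵀ * (Uᵀ * U + V) * W = (k : ℝ) • Y ∧
        V.IsSymm ∧
        (∀ i, ∑ j ∈ Finset.univ.erase i, |V i j| ≤ V i i) := by
  constructor
  · intro hY
    choose A hA using hint
    have hYA : Y = (of A).map (Int.castRingHom ℝ) := by ext i j; exact hA i j
    obtain ⟨m, W, d, k, hk, hd, hW⟩ :=
      (PosSemidef.of_map_intCast (hYA ▸ hY)).exists_transpose_mul_diagonal_mul_eq_smul
    refine ⟨m, 0, 0, (diagonal d).map (Int.castRingHom ℝ), W.map (Int.castRingHom ℝ), k.toNat,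
      by omega, fun i => i.elim0, fun i j => ⟨_, rfl⟩, fun i j => ⟨_, rfl⟩, ?_, ?_, fun i => ?_⟩
    · have hWR := congrArg (Matrix.map · (Int.castRingHom ℝ)) hW
      have hkR : ((k.toNat : ℕ) : ℝ) = k := by exact_mod_cast Int.toNat_of_nonneg hk.le
      simp only [Matrix.map_mul, transpose_map] at hWR
      rw [transpose_zero, Matrix.zero_mul, zero_add, hWR, hYA, hkR]
      ext i j
      simp
    · rw [diagonal_map (map_zero _)]
      exact isSymm_diagonal _
    · rw [Finset.sum_eq_zero fun j hj => by simp [(Finset.ne_of_mem_erase hj).symm]]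
      simpa using hd i
  · rintro ⟨m, p, U, V, W, k, hk, -, -, -, hWUVW, hVsymm, hVdd⟩
    have hkY : ((k : ℝ) • Y).PosSemidef := by
      rw [← hWUVW, ← conjTranspose_eq_transpose_of_trivial]
      exact ((posSemidef_conjTranspose_mul_self U).add
        (hVsymm.posSemidef_of_sum_abs_le hVdd)).conjTranspose_mul_mul_same W
    have hk' : (0 : ℝ) < k := by exact_mod_cast hk
    simpa [hk'.ne'] using hkY.smul (inv_nonneg.mpr hk'.le)

/-- a symmetric integer matrix `Y` is positive semidefinite iff it has a
`UVW`-certificate: integer matrices `U`, `V`, `W` and a positive integer `k` with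
`Wᵀ(UᵀU + V)W = kY` and `V` symmetric and diagonally dominant. -/
theorem stmt_0 (n : ℕ) (Y : Matrix (Fin n) (Fin n) ℝ)
    (hsymm : Y.IsSymm) (hint : ∀ i j, ∃ z : ℤ, Y i j = (z : ℝ)) :
    Y.PosSemidef ↔
      ∃ (m p : ℕ) (U : Matrix (Fin p) (Fin m) ℝ) (V : Matrix (Fin m) (Fin m) ℝ)
        (W : Matrix (Fin m) (Fin n) ℝ) (k : ℕ),
        0 < k ∧
        (∀ i j, ∃ z : ℤ, U i j = (z : ℝ)) ∧
        (∀ i j, ∃ z : ℤ, V i j = (z : ℝ)) ∧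
        (∀ i j, ∃ z : ℤ, W i j = (z : ℝ)) ∧
        Wᵀ * (Uᵀ * U + V) * W = (k : ℝ) • Y ∧
        V.IsSymm ∧
        (∀ i, ∑ j ∈ Finset.univ.erase i, |V i j| ≤ V i i) :=
  stmt_0_general n Y hint
end

section
/- FRAC(G) = STAB(G) if and only if every {0,1}-point of FRAC(G) spans it, which holds exactly when G is bipartite; in particular, if G is bipartite then every vertex of FRAC(G) is integral. -/
open BigOperators

/-- The fractional stable set polytope of a simple graph. -/
def FRAC {V : Type} (G : SimpleGraph V) : Set (V → ℝ) :=
  {x | (∀ v, x v ∈ Set.Icc (0 : ℝ) 1) ∧ ∀ u v, G.Adj u v → x u + x v ≤ 1}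

/-- The stable set polytope: the integer hull of `FRAC(G)`. -/
def STAB {V : Type} (G : SimpleGraph V) : Set (V → ℝ) :=
  convexHull ℝ (FRAC G ∩ {x | ∀ v, x v = 0 ∨ x v = 1})

open SimpleGraph
open scoped Classical

lemma frac_convex {V : Type} (G : SimpleGraph V) : Convex ℝ (FRAC G) := by
  intro p hp q hq a b ha hb hab
  constructor
  · intro v
    have h1 := hp.1 v
    have h2 := hq.1 v
    rw [Set.mem_Icc] at h1 h2 ⊢
    constructor
    · have : 0 ≤ a * p v + b * q v := add_nonneg (mul_nonneg ha h1.1) (mul_nonneg hb h2.1)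
      simpa using this
    · have : a * p v + b * q v ≤ a * 1 + b * 1 := by
        apply add_le_add <;> apply mul_le_mul_of_nonneg_left <;> first | exact h1.2 | exact h2.2 | exact ha | exact hb
      simp only [Pi.add_apply, Pi.smul_apply, smul_eq_mul]
      calc a * p v + b * q v ≤ a * 1 + b * 1 := this
        _ = 1 := by rw [mul_one, mul_one, hab]
  · intro u v huv
    have h1 := hp.2 u v huv
    have h2 := hq.2 u v huv
    simp only [Pi.add_apply, Pi.smul_apply, smul_eq_mul]
    nlinarith

lemma stab_subset_frac {V : Type} (G : SimpleGraph V) : STAB G ⊆ FRAC G :=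
  convexHull_min Set.inter_subset_left (frac_convex G)

lemma parity_lemma {V : Type} {G : SimpleGraph V}
    (H : ∀ (v : V) (p : G.Walk v v), ¬ Odd p.length)
    {a b : V} (p q : G.Walk a b) : (Odd p.length ↔ Odd q.length) := by
  have h := H a (p.append q.reverse)
  rw [Walk.length_append, Walk.length_reverse, Nat.odd_add] at h
  rcases Nat.even_or_odd q.length with hq | hq
  · have hp : ¬ Odd p.length := fun hp => h (iff_of_true hp hq)
    simp [hp, Nat.not_odd_iff_even.mpr hq]
  · have hp : Odd p.length := by
      by_contra hp
      exact h (iff_of_false hp (Nat.not_even_iff_odd.mpr hq))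
    simp [hp, hq]


lemma colorable_of_no_odd_walk {V : Type} {G : SimpleGraph V}
    (H : ∀ (v : V) (p : G.Walk v v), ¬ Odd p.length) : G.Colorable 2 := by
  classical
  let rep : V → V := fun v => (G.connectedComponentMk v).out
  have hreach : ∀ v, G.Reachable (rep v) v := fun v =>
    ConnectedComponent.exact ((G.connectedComponentMk v).out_eq)
  let c : V → Bool := fun v => decide (∃ p : G.Walk (rep v) v, Odd p.length)
  have hc : ∀ {a b : V} (q : G.Walk (rep a) a), b = a → (c b = true ↔ Odd q.length) := by
    rintro a b q rfl
    simp only [c, decide_eq_true_eq]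
    constructor
    · rintro ⟨p, hp⟩; exact (parity_lemma H p q).mp hp
    · intro h; exact ⟨q, h⟩
  have valid : ∀ {a b : V}, G.Adj a b → c a ≠ c b := by
    intro a b hab
    have hrepeq : rep b = rep a := by
      show (G.connectedComponentMk b).out = (G.connectedComponentMk a).out
      rw [ConnectedComponent.sound hab.symm.reachable]
    obtain ⟨q⟩ := hreach a
    have h1 : c a = true ↔ Odd q.length := hc q rfl
    let q' : G.Walk (rep b) b := (q.concat hab).copy hrepeq.symm rfl
    have hq' : q'.length = q.length + 1 := by
      simp [q', Walk.length_copy, Walk.length_concat]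
    have h2 : c b = true ↔ Odd (q.length + 1) := by
      rw [← hq']; exact hc q' rfl
    intro hcc
    rw [hcc] at h1
    rw [Nat.odd_add_one, ← h1] at h2
    rcases Bool.eq_false_or_eq_true (c b) with h | h <;> simp [h] at h1 h2 <;> simp [h1] at h2
  have col : G.Coloring Bool := Coloring.mk c valid
  simpa using col.colorable

lemma half_mem_frac {V : Type} (G : SimpleGraph V) : (fun _ => (1:ℝ)/2) ∈ FRAC G := by
  constructor
  · intro v; constructor <;> norm_num
  · intro u v _; norm_num


lemma half_notMem_stab {V : Type} (G : SimpleGraph V) {v : V} (w : G.Walk v v)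
    (hodd : Odd w.length) : (fun _ => (1:ℝ)/2) ∉ STAB G := by
  classical
  set n := w.length with hn
  set L : (V → ℝ) → ℝ := fun x => ∑ i ∈ Finset.range n, x (w.getVert i) with hL
  have hlin : IsLinearMap ℝ L := by
    constructor
    · intro x y; simp [hL, Finset.sum_add_distrib]
    · intro c x; simp [hL, Finset.mul_sum]
  have hconv : Convex ℝ {x : V → ℝ | L x ≤ ((n:ℝ) - 1)/2} :=
    convex_halfSpace_le hlin _
  have hsub : FRAC G ∩ {x | ∀ v, x v = 0 ∨ x v = 1} ⊆ {x : V → ℝ | L x ≤ ((n:ℝ) - 1)/2} := by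
    rintro s ⟨hs, hint⟩
    -- 2 L s ≤ n
    have hf0 : s (w.getVert n) = s (w.getVert 0) := by
      simp [hn, Walk.getVert_length w, Walk.getVert_zero]
    have hshift : ∑ i ∈ Finset.range n, s (w.getVert (i+1)) = L s := by
      have h1 : ∑ i ∈ Finset.range (n+1), s (w.getVert i)
          = (∑ i ∈ Finset.range n, s (w.getVert (i+1))) + s (w.getVert 0) :=
        Finset.sum_range_succ' _ n
      have h2 : ∑ i ∈ Finset.range (n+1), s (w.getVert i)
          = (∑ i ∈ Finset.range n, s (w.getVert i)) + s (w.getVert n) :=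
        Finset.sum_range_succ _ n
      simp only [hL]
      rw [hf0] at h2
      linarith [h1, h2]
    have hedge : ∀ i ∈ Finset.range n, s (w.getVert i) + s (w.getVert (i+1)) ≤ 1 := by
      intro i hi
      exact hs.2 _ _ (w.adj_getVert_succ (Finset.mem_range.mp hi))
    have h2L : 2 * L s ≤ (n:ℝ) := by
      have := Finset.sum_le_sum hedge
      rw [Finset.sum_add_distrib, hshift] at this
      simpa [two_mul] using this
    have hLnat : L s = ((Finset.range n).filter (fun i => s (w.getVert i) = 1)).card := by
      rw [hL]
      rw [← Finset.sum_boole]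
      apply Finset.sum_congr rfl
      intro i _
      rcases hint (w.getVert i) with h | h <;> simp [h]
    set k := ((Finset.range n).filter (fun i => s (w.getVert i) = 1)).card with hk
    rw [hLnat] at h2L
    have h2k : 2 * k ≤ n := by exact_mod_cast h2L
    have hne : 2 * k ≠ n := fun h => (Nat.not_odd_iff_even.mpr ⟨k, by omega⟩) (h ▸ hodd)
    have h1n : 1 ≤ n := hodd.pos
    have hle : 2 * k ≤ n - 1 := by omega
    have : ((2 * k : ℕ) : ℝ) ≤ ((n - 1 : ℕ) : ℝ) := Nat.cast_le.mpr hle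
    rw [Nat.cast_sub h1n] at this
    push_cast at this
    show s ∈ {x | L x ≤ ((n:ℝ)-1)/2}
    rw [Set.mem_setOf_eq, hLnat]
    linarith
  have hhalf : L (fun _ => (1:ℝ)/2) = (n:ℝ)/2 := by
    simp [hL]
    ring
  intro hmem
  have hmem2 := convexHull_min hsub hconv hmem
  rw [Set.mem_setOf_eq, hhalf] at hmem2
  have hn1 : 1 ≤ n := hodd.pos
  have hn1' : (1:ℝ) ≤ (n:ℝ) := by exact_mod_cast hn1
  linarith

lemma move {V : Type} [Fintype V] {G : SimpleGraph V} (C : G.Coloring Bool)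
    {x : V → ℝ} (hx : x ∈ FRAC G)
    (hF : (Finset.univ.filter (fun v => x v ≠ 0 ∧ x v ≠ 1)).Nonempty) :
    ∃ t : ℝ, 0 < t ∧
      (fun v => x v + t * (if x v ≠ 0 ∧ x v ≠ 1 then (if C v then 1 else -1) else 0)) ∈ FRAC G ∧
      (Finset.univ.filter (fun v =>
          (x v + t * (if x v ≠ 0 ∧ x v ≠ 1 then (if C v then 1 else -1) else 0)) ≠ 0 ∧
          (x v + t * (if x v ≠ 0 ∧ x v ≠ 1 then (if C v then 1 else -1) else 0)) ≠ 1)).card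
        < (Finset.univ.filter (fun v => x v ≠ 0 ∧ x v ≠ 1)).card := by
  have hmemF : ∀ v : V, v ∈ Finset.univ.filter (fun v => x v ≠ 0 ∧ x v ≠ 1)
      ↔ (x v ≠ 0 ∧ x v ≠ 1) := by intro v; simp
  have hfrac : ∀ v : V, (x v ≠ 0 ∧ x v ≠ 1) → 0 < x v ∧ x v < 1 := by
    intro v hv
    have h := hx.1 v
    exact ⟨lt_of_le_of_ne h.1 (Ne.symm hv.1), lt_of_le_of_ne h.2 hv.2⟩
  set g : V → ℝ := fun v => if C v then 1 - x v else x v with hg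
  set t := (Finset.univ.filter (fun v => x v ≠ 0 ∧ x v ≠ 1)).inf' hF g with ht
  have htpos : 0 < t := by
    rw [ht, Finset.lt_inf'_iff]
    intro v hv
    rcases hfrac v ((hmemF v).mp hv) with ⟨h0, h1⟩
    by_cases hC : C v <;> simp only [hg, hC, if_true, if_false] <;> simp [hC] <;> linarith
  have hslack1 : ∀ v : V, (x v ≠ 0 ∧ x v ≠ 1) → C v = true → t ≤ 1 - x v := by
    intro v hv hC
    have := Finset.inf'_le g ((hmemF v).mpr hv)
    rw [← ht] at this
    simpa [hg, hC] using this
  have hslack2 : ∀ v : V, (x v ≠ 0 ∧ x v ≠ 1) → C v = false → t ≤ x v := by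
    intro v hv hC
    have := Finset.inf'_le g ((hmemF v).mpr hv)
    rw [← ht] at this
    simpa [hg, hC] using this
  set y : V → ℝ := fun v =>
    x v + t * (if x v ≠ 0 ∧ x v ≠ 1 then (if C v then 1 else -1) else 0) with hy
  have hy1 : ∀ v : V, (x v ≠ 0 ∧ x v ≠ 1) → C v = true → y v = x v + t := by
    intro v hv hC; simp [hy, hv, hC]
  have hy2 : ∀ v : V, (x v ≠ 0 ∧ x v ≠ 1) → C v = false → y v = x v - t := by
    intro v hv hC; simp [hy, hv, hC]; ring
  have hy3 : ∀ v : V, ¬(x v ≠ 0 ∧ x v ≠ 1) → y v = x v := by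
    intro v hv; simp [hy, hv]
  have hycases : ∀ v : V, (y v = x v ∧ ¬(x v ≠ 0 ∧ x v ≠ 1))
      ∨ (y v = x v + t ∧ x v ≠ 0 ∧ x v ≠ 1 ∧ C v = true)
      ∨ (y v = x v - t ∧ x v ≠ 0 ∧ x v ≠ 1 ∧ C v = false) := by
    intro v
    by_cases hv : x v ≠ 0 ∧ x v ≠ 1
    · rcases Bool.eq_false_or_eq_true (C v) with hC | hC
      · exact Or.inr (Or.inl ⟨hy1 v hv hC, hv.1, hv.2, hC⟩)
      · exact Or.inr (Or.inr ⟨hy2 v hv hC, hv.1, hv.2, hC⟩)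
    · exact Or.inl ⟨hy3 v hv, hv⟩
  refine ⟨t, htpos, ?_, ?_⟩
  · constructor
    · intro v
      rw [Set.mem_Icc]
      show 0 ≤ y v ∧ y v ≤ 1
      rcases hycases v with ⟨h, -⟩ | ⟨h, h0, h1, hC⟩ | ⟨h, h0, h1, hC⟩
      · rw [h]; exact hx.1 v
      · rcases hfrac v ⟨h0, h1⟩ with ⟨hl, hr⟩
        have := hslack1 v ⟨h0, h1⟩ hC
        rw [h]
        constructor <;> linarith
      · rcases hfrac v ⟨h0, h1⟩ with ⟨hl, hr⟩
        have := hslack2 v ⟨h0, h1⟩ hC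
        rw [h]
        constructor <;> linarith
    · intro u v huv
      have hCuv : C u ≠ C v := C.valid huv
      have hsum := hx.2 u v huv
      show y u + y v ≤ 1
      have hint0 : ∀ w w' : V, ¬(x w ≠ 0 ∧ x w ≠ 1) → x w + x w' ≤ 1 → 0 < x w' → x w = 0 := by
        intro w w' hw hs h0
        rcases not_and_or.mp hw with h | h
        · exact not_not.mp h
        · exfalso; have := not_not.mp h; linarith
      rcases hycases u with ⟨hu, hu'⟩ | ⟨hu, hu0, hu1, hCu⟩ | ⟨hu, hu0, hu1, hCu⟩ <;>
        rcases hycases v with ⟨hv, hv'⟩ | ⟨hv, hv0, hv1, hCv⟩ | ⟨hv, hv0, hv1, hCv⟩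
      · rw [hu, hv]; exact hsum
      · rcases hfrac v ⟨hv0, hv1⟩ with ⟨hl, hr⟩
        have hxu : x u = 0 := hint0 u v hu' hsum hl
        have := hslack1 v ⟨hv0, hv1⟩ hCv
        rw [hu, hv, hxu]; linarith
      · rw [hu, hv]; linarith
      · rcases hfrac u ⟨hu0, hu1⟩ with ⟨hl, hr⟩
        have hxv : x v = 0 := hint0 v u hv' (by linarith) hl
        have := hslack1 u ⟨hu0, hu1⟩ hCu
        rw [hu, hv, hxv]; linarith
      · exact absurd (hCu ▸ hCv ▸ rfl : C u = C v) hCuv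
      · rw [hu, hv]; linarith
      · rw [hu, hv]; linarith
      · rw [hu, hv]; linarith
      · exact absurd (hCu ▸ hCv ▸ rfl : C u = C v) hCuv
  · apply Finset.card_lt_card
    rw [Finset.ssubset_iff_of_subset]
    · obtain ⟨v0, hv0F, hv0⟩ := Finset.exists_mem_eq_inf' hF g
      have hv0frac : x v0 ≠ 0 ∧ x v0 ≠ 1 := (hmemF v0).mp hv0F
      have hyint : y v0 = 0 ∨ y v0 = 1 := by
        rcases Bool.eq_false_or_eq_true (C v0) with hC | hC
        · right
          rw [hy1 v0 hv0frac hC, ht, hv0]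
          simp [hg, hC]
        · left
          rw [hy2 v0 hv0frac hC, ht, hv0]
          simp [hg, hC]
      refine ⟨v0, (hmemF v0).mpr hv0frac, ?_⟩
      simp only [Finset.mem_filter, Finset.mem_univ, true_and]
      push_neg
      show y v0 ≠ 0 → y v0 = 1
      intro hne0
      rcases hyint with h | h
      · exact absurd h hne0
      · exact h
    · intro v hv
      rw [Finset.mem_filter] at hv
      rw [hmemF]
      by_contra hcon
      have heq : y v = x v := hy3 v hcon
      have h2 : y v ≠ 0 ∧ y v ≠ 1 := hv.2
      rcases not_and_or.mp hcon with h | h <;> have h' := not_not.mp h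
      · exact h2.1 (by rw [heq, h'])
      · exact h2.2 (by rw [heq, h'])


lemma frac_subset_stab {V : Type} [Fintype V] {G : SimpleGraph V}
    (C : G.Coloring Bool) : FRAC G ⊆ STAB G := by
  let C' : G.Coloring Bool := Coloring.mk (fun v => !C v)
    (fun {a b} hab h => C.valid hab (Bool.not_inj h))
  have hC' : ∀ v, C' v = !C v := fun v => rfl
  suffices H : ∀ n : ℕ, ∀ x : V → ℝ, x ∈ FRAC G →
      (Finset.univ.filter (fun v => x v ≠ 0 ∧ x v ≠ 1)).card ≤ n → x ∈ STAB G by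
    intro x hx
    exact H _ x hx le_rfl
  intro n
  induction n with
  | zero =>
    intro x hx hcard
    have hempty : (Finset.univ.filter (fun v => x v ≠ 0 ∧ x v ≠ 1)) = ∅ :=
      Finset.card_eq_zero.mp (Nat.le_zero.mp hcard)
    have hint : ∀ v, x v = 0 ∨ x v = 1 := by
      intro v
      by_contra hcon
      push_neg at hcon
      have : v ∈ Finset.univ.filter (fun v => x v ≠ 0 ∧ x v ≠ 1) := by simp [hcon.1, hcon.2]
      rw [hempty] at this
      exact absurd this (Finset.notMem_empty v)
    exact subset_convexHull ℝ _ ⟨hx, hint⟩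
  | succ n ih =>
    intro x hx hcard
    by_cases hF : (Finset.univ.filter (fun v => x v ≠ 0 ∧ x v ≠ 1)).Nonempty
    · obtain ⟨t, htpos, hyF, hycard⟩ := move C hx hF
      obtain ⟨t', ht'pos, hzF, hzcard⟩ := move C' hx hF
      set d : V → ℝ := fun v => if x v ≠ 0 ∧ x v ≠ 1 then (if C v then 1 else -1) else 0 with hd
      set y : V → ℝ := fun v => x v + t * d v with hy
      set z : V → ℝ := fun v =>
        x v + t' * (if x v ≠ 0 ∧ x v ≠ 1 then (if C' v then 1 else -1) else 0) with hz
      have hzd : ∀ v, z v = x v - t' * d v := by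
        intro v
        rw [hz, hd]
        simp only
        by_cases hv : x v ≠ 0 ∧ x v ≠ 1
        · rcases Bool.eq_false_or_eq_true (C v) with hB | hB <;>
            simp [hv, hC' v, hB] <;> ring
        · simp [hv]
      have hycard2 : (Finset.univ.filter (fun v => y v ≠ 0 ∧ y v ≠ 1)).card
          < (Finset.univ.filter (fun v => x v ≠ 0 ∧ x v ≠ 1)).card := hycard
      have hzcard2 : (Finset.univ.filter (fun v => z v ≠ 0 ∧ z v ≠ 1)).card
          < (Finset.univ.filter (fun v => x v ≠ 0 ∧ x v ≠ 1)).card := hzcard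
      have hy' : y ∈ STAB G := ih y hyF (by omega)
      have hz' : z ∈ STAB G := ih z hzF (by omega)
      have hts : 0 < t + t' := by linarith
      set a := t' / (t + t') with ha
      set b := t / (t + t') with hb
      have ha0 : 0 ≤ a := by positivity
      have hb0 : 0 ≤ b := by positivity
      have hab : a + b = 1 := by
        rw [ha, hb]
        field_simp
        ring
      have hcomb : a • y + b • z = x := by
        funext v
        simp only [Pi.add_apply, Pi.smul_apply, smul_eq_mul]
        rw [hy, hzd v]
        simp only
        have h1 : a * t - b * t' = 0 := by
          rw [ha, hb]
          field_simp
          ring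
        have : a * (x v + t * d v) + b * (x v - t' * d v)
            = (a + b) * x v + (a * t - b * t') * d v := by ring
        rw [this, hab, h1]
        ring
      rw [← hcomb]
      exact (convex_convexHull ℝ _) hy' hz' ha0 hb0 hab
    · have hempty := Finset.not_nonempty_iff_eq_empty.mp hF
      have hint : ∀ v, x v = 0 ∨ x v = 1 := by
        intro v
        by_contra hcon
        push_neg at hcon
        have : v ∈ Finset.univ.filter (fun v => x v ≠ 0 ∧ x v ≠ 1) := by simp [hcon.1, hcon.2]
        rw [hempty] at this
        exact absurd this (Finset.notMem_empty v)
      exact subset_convexHull ℝ _ ⟨hx, hint⟩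

/-- `FRAC(G) = STAB(G)` if and only if `G` is bipartite (2-colorable);
in particular, if `G` is bipartite then every extreme point (vertex) of `FRAC(G)` is
integral. -/
theorem stmt_8 {V : Type} [Fintype V] (G : SimpleGraph V) :
    (FRAC G = STAB G ↔ G.Colorable 2) ∧
    (G.Colorable 2 →
      ∀ x ∈ Set.extremePoints ℝ (FRAC G), ∀ v, x v = 0 ∨ x v = 1) := by
  have hiff : FRAC G = STAB G ↔ G.Colorable 2 := by
    constructor
    · intro h
      by_contra hnc
      have hodd : ¬ ∀ (v : V) (p : G.Walk v v), ¬ Odd p.length :=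
        fun hw => hnc (colorable_of_no_odd_walk hw)
      push_neg at hodd
      obtain ⟨v, p, hp⟩ := hodd
      have hmem := half_mem_frac G
      rw [h] at hmem
      exact half_notMem_stab G p hp hmem
    · intro hcol
      have c : G.Coloring (Fin 2) := hcol.some
      have C : G.Coloring Bool := recolorOfEquiv G finTwoEquiv c
      exact Set.Subset.antisymm (frac_subset_stab C) (stab_subset_frac G)
  refine ⟨hiff, ?_⟩
  intro hcol x hx v
  rw [hiff.mpr hcol] at hx
  have hxS := extremePoints_convexHull_subset hx
  exact hxS.2 v
end

section
/- Let G ∈ 𝒦_{n,d} with ω(G) ≥ 3. Then G has an edge subgraph H ∈ 𝒦_{n,d} with |E(H)| = n(n−1)/2 + 2d and ω(H) = ω(G). -/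
open BigOperators

/-- `G ∈ 𝒦_{n,d}`: obtained from `K_n` by 2-stretching `d` of its vertices (see the
structural characterization via association classes). -/
def IsStretchedClique {W : Type} [Fintype W] (n d : ℕ) (G : SimpleGraph W) : Prop :=
  ∃ (φ : W → Fin n) (c : Fin n → W) (D : Finset (Fin n)),
    D.card = d ∧
    Function.Surjective φ ∧
    (∀ i ∉ D, ∀ u v : W, φ u = i → φ v = i → u = v) ∧
    (∀ i ∈ D, φ (c i) = i) ∧
    (∀ i ∈ D, (Finset.univ.filter fun w : W => φ w = i).card = 3) ∧
    (∀ i ∈ D, ∀ w : W, G.Adj (c i) w ↔ (φ w = i ∧ w ≠ c i)) ∧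
    (∀ u v : W, φ u = φ v → G.Adj u v → (u = c (φ u) ∨ v = c (φ u))) ∧
    (∀ i j : Fin n, i ≠ j → ∃ u v : W, φ u = i ∧ φ v = j ∧ G.Adj u v)

/-- The clique number `ω(G)`. -/
noncomputable def cliqueNum {W : Type} (G : SimpleGraph W) : ℕ :=
  sSup {k | ∃ S : Finset W, G.IsNClique k S}

/-! The only edges inside an association class are the two edges at its centre `c i`, and the
two other vertices of the class are not adjacent; so no triangle has two vertices in one class,
and a maximum clique `S` (of size at least 3) meets every class at most once. Keep the edges
inside classes and, for each pair of distinct classes, a single edge between them, namely the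
edge of `S` when `S` meets both classes. This graph still contains `S`, and it has `2d` edges
inside classes plus one edge for each of the `n.choose 2` pairs of classes. -/

namespace SimpleGraph

variable {V α : Type*} {G H : SimpleGraph V} {φ : V → α}

lemma exists_adj_of_map_eq {e : Sym2 V} (he : e ∈ G.edgeSet) {i j : α}
    (h : e.map φ = s(i, j)) : ∃ u v, φ u = i ∧ φ v = j ∧ G.Adj u v := by
  induction e using Sym2.ind with
  | _ u v =>
    rcases Sym2.eq_iff.1 h with ⟨rfl, rfl⟩ | ⟨rfl, rfl⟩
    · exact ⟨u, v, rfl, rfl, he⟩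
    · exact ⟨v, u, rfl, rfl, G.adj_symm he⟩

lemma IsClique.injOn_of_three_le
    (hφ : ∀ u v w, G.Adj u v → G.Adj u w → G.Adj v w → φ u ≠ φ v) {s : Finset V}
    (hs : G.IsClique (s : Set V)) (h3 : 3 ≤ s.card) : Set.InjOn φ s := by
  classical
  intro u hu v hv huv
  by_contra hne
  obtain ⟨w, hw, hwuv⟩ : ∃ w ∈ s, w ∉ ({u, v} : Finset V) :=
    Finset.exists_mem_notMem_of_card_lt_card ((Finset.card_le_two).trans_lt h3)
  rw [Finset.mem_insert, Finset.mem_singleton, not_or] at hwuv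
  exact hφ u v w (hs hu hv hne) (hs hu hw (Ne.symm hwuv.1)) (hs hv hw (Ne.symm hwuv.2)) huv

lemma cliqueNum_eq_of_le_of_isClique [Finite V] (hHG : H ≤ G) {s : Finset V}
    (hs : H.IsClique (s : Set V)) (hcard : s.card = G.cliqueNum) :
    H.cliqueNum = G.cliqueNum := by
  obtain ⟨t, ht⟩ := H.exists_isNClique_cliqueNum
  refine le_antisymm ?_ (hcard ▸ hs.card_le_cliqueNum)
  exact ht.card_eq ▸ (ht.isClique.mono hHG).card_le_cliqueNum

def fiberEdges (G : SimpleGraph V) (φ : V → α) : Set (Sym2 V) :=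
  {e ∈ G.edgeSet | (e.map φ).IsDiag}

def restrictCrossEdges (G : SimpleGraph V) (φ : V → α)
    (pick : {p : Sym2 α // ¬p.IsDiag} → Sym2 V) : SimpleGraph V :=
  fromEdgeSet (G.fiberEdges φ ∪ Set.range pick)

variable {pick : {p : Sym2 α // ¬p.IsDiag} → Sym2 V}

lemma edgeSet_restrictCrossEdges (hpick : ∀ p, pick p ∈ G.edgeSet) :
    (G.restrictCrossEdges φ pick).edgeSet = G.fiberEdges φ ∪ Set.range pick := by
  refine (edgeSet_fromEdgeSet _).trans (sdiff_eq_left.2 (Set.disjoint_left.2 ?_))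
  rintro e (he | ⟨p, rfl⟩)
  · exact G.not_isDiag_of_mem_edgeSet he.1
  · exact G.not_isDiag_of_mem_edgeSet (hpick p)

lemma restrictCrossEdges_le (hpick : ∀ p, pick p ∈ G.edgeSet) :
    G.restrictCrossEdges φ pick ≤ G := by
  rw [← edgeSet_subset_edgeSet, edgeSet_restrictCrossEdges hpick]
  exact Set.union_subset (Set.sep_subset _ _) (Set.range_subset_iff.2 hpick)

lemma restrictCrossEdges_adj_of_eq {u v : V} (huv : G.Adj u v) (heq : φ u = φ v) :
    (G.restrictCrossEdges φ pick).Adj u v :=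
  (fromEdgeSet_adj _).2 ⟨Or.inl ⟨huv, Sym2.mk_isDiag_iff.2 heq⟩, huv.ne⟩

lemma restrictCrossEdges_adj_of_mem_range {u v : V} (h : s(u, v) ∈ Set.range pick)
    (huv : u ≠ v) : (G.restrictCrossEdges φ pick).Adj u v :=
  (fromEdgeSet_adj _).2 ⟨Or.inr h, huv⟩

lemma exists_adj_restrictCrossEdges (hpick : ∀ p, pick p ∈ G.edgeSet ∧ (pick p).map φ = p)
    {i j : α} (hij : i ≠ j) :
    ∃ u v, φ u = i ∧ φ v = j ∧ (G.restrictCrossEdges φ pick).Adj u v := by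
  let p : {p : Sym2 α // ¬p.IsDiag} := ⟨s(i, j), Sym2.mk_isDiag_iff.not.2 hij⟩
  refine exists_adj_of_map_eq ?_ (hpick p).2
  rw [edgeSet_restrictCrossEdges fun p => (hpick p).1]
  exact Or.inr ⟨p, rfl⟩

lemma ncard_edgeSet_restrictCrossEdges [Fintype V] [Fintype α] [DecidableEq α]
    (hpick : ∀ p, pick p ∈ G.edgeSet ∧ (pick p).map φ = p) :
    (G.restrictCrossEdges φ pick).edgeSet.ncard =
      (G.fiberEdges φ).ncard + (Fintype.card α).choose 2 := by
  have hinj : Function.Injective pick := fun p q h =>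
    Subtype.ext ((hpick p).2.symm.trans (h ▸ (hpick q).2))
  have hdisj : Disjoint (G.fiberEdges φ) (Set.range pick) := by
    rw [Set.disjoint_left]
    rintro e hfib ⟨p, rfl⟩
    exact p.2 ((hpick p).2 ▸ hfib.2)
  rw [edgeSet_restrictCrossEdges fun p => (hpick p).1, Set.ncard_union_eq hdisj,
    Set.ncard_range_of_injective hinj, Nat.card_eq_fintype_card, Sym2.card_subtype_not_diag]

lemma exists_pick_of_isClique
    (hcross : ∀ i j : α, i ≠ j → ∃ u v, φ u = i ∧ φ v = j ∧ G.Adj u v) {s : Set V}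
    (hs : G.IsClique s) (hinj : Set.InjOn φ s) :
    ∃ pick : {p : Sym2 α // ¬p.IsDiag} → Sym2 V,
      (∀ p, pick p ∈ G.edgeSet ∧ (pick p).map φ = p) ∧
      ∀ u ∈ s, ∀ v ∈ s, u ≠ v → s(u, v) ∈ Set.range pick := by
  have key : ∀ p : {p : Sym2 α // ¬p.IsDiag}, ∃ e : Sym2 V, (e ∈ G.edgeSet ∧ e.map φ = p) ∧
      ∀ u ∈ s, ∀ v ∈ s, s(φ u, φ v) = p → e = s(u, v) := by
    rintro ⟨p, hp⟩
    by_cases hps : ∃ u ∈ s, ∃ v ∈ s, s(φ u, φ v) = p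
    · obtain ⟨u, hu, v, hv, rfl⟩ := hps
      have huv : u ≠ v := by rintro rfl; exact hp (Sym2.mk_isDiag_iff.2 rfl)
      refine ⟨s(u, v), ⟨hs hu hv huv, rfl⟩, fun u' hu' v' hv' h => ?_⟩
      rcases Sym2.eq_iff.1 h with ⟨h1, h2⟩ | ⟨h1, h2⟩
      · rw [hinj hu' hu h1, hinj hv' hv h2]
      · rw [hinj hu' hv h1, hinj hv' hu h2, Sym2.eq_swap]
    · induction p using Sym2.ind with
      | _ i j =>
        obtain ⟨u, v, rfl, rfl, huv⟩ := hcross i j (Sym2.mk_isDiag_iff.not.1 hp)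
        exact ⟨s(u, v), ⟨huv, rfl⟩, fun u' hu' v' hv' h => (hps ⟨u', hu', v', hv', h⟩).elim⟩
  choose pick hpick hpick_s using key
  refine ⟨pick, hpick, fun u hu v hv huv => ?_⟩
  have hφ : ¬(s(φ u, φ v)).IsDiag := Sym2.mk_isDiag_iff.not.2 (hinj.ne hu hv huv)
  exact ⟨⟨s(φ u, φ v), hφ⟩, hpick_s _ u hu v hv rfl⟩

end SimpleGraph

section StretchedClique

variable {V α : Type*} {G : SimpleGraph V} {φ : V → α} {c : α → V} {D : Finset α}

lemma mem_of_adj_of_map_eq (hinj : ∀ i ∉ D, ∀ u v : V, φ u = i → φ v = i → u = v) {u v : V}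
    (huv : G.Adj u v) (heq : φ u = φ v) : φ u ∈ D := by
  by_contra hD
  exact huv.ne (hinj _ hD u v rfl heq.symm)

lemma not_adj_of_centre_adj (hcadj : ∀ i ∈ D, ∀ w : V, G.Adj (c i) w ↔ (φ w = i ∧ w ≠ c i))
    (hwithin : ∀ u v : V, φ u = φ v → G.Adj u v → (u = c (φ u) ∨ v = c (φ u)))
    {i : α} (hi : i ∈ D) {x y : V} (hx : G.Adj (c i) x) (hy : G.Adj (c i) y) : ¬G.Adj x y := by
  intro hxy
  obtain ⟨hxi, hxc⟩ := (hcadj i hi x).1 hx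
  obtain ⟨hyi, hyc⟩ := (hcadj i hi y).1 hy
  rcases hwithin x y (hxi.trans hyi.symm) hxy with h | h
  · exact hxc (hxi ▸ h)
  · exact hyc (hxi ▸ h)

lemma map_ne_of_triangle (hinj : ∀ i ∉ D, ∀ u v : V, φ u = i → φ v = i → u = v)
    (hcadj : ∀ i ∈ D, ∀ w : V, G.Adj (c i) w ↔ (φ w = i ∧ w ≠ c i))
    (hwithin : ∀ u v : V, φ u = φ v → G.Adj u v → (u = c (φ u) ∨ v = c (φ u)))
    {u v w : V} (huv : G.Adj u v) (huw : G.Adj u w) (hvw : G.Adj v w) : φ u ≠ φ v := by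
  intro heq
  have hD := mem_of_adj_of_map_eq hinj huv heq
  rcases hwithin u v heq huv with hu | hv
  · rw [hu] at huv huw
    exact not_adj_of_centre_adj hcadj hwithin hD huv huw hvw
  · rw [hv] at huv hvw
    exact not_adj_of_centre_adj hcadj hwithin hD huv.symm hvw huw

lemma fiberEdges_eq_image (hinj : ∀ i ∉ D, ∀ u v : V, φ u = i → φ v = i → u = v)
    (hcD : ∀ i ∈ D, φ (c i) = i)
    (hcadj : ∀ i ∈ D, ∀ w : V, G.Adj (c i) w ↔ (φ w = i ∧ w ≠ c i))
    (hwithin : ∀ u v : V, φ u = φ v → G.Adj u v → (u = c (φ u) ∨ v = c (φ u))) :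
    G.fiberEdges φ = (fun x => s(c (φ x), x)) '' {x | φ x ∈ D ∧ x ≠ c (φ x)} := by
  ext e
  constructor
  · rintro ⟨he, hdiag⟩
    induction e using Sym2.ind with
    | _ u v =>
      have heq : φ u = φ v := Sym2.mk_isDiag_iff.1 hdiag
      have hD := mem_of_adj_of_map_eq hinj he heq
      rcases hwithin u v heq he with hu | hv
      · refine ⟨v, ⟨heq ▸ hD, fun hv => he.ne ?_⟩, ?_⟩
        · rw [hu, hv, heq]
        · show s(c (φ v), v) = s(u, v)
          rw [← heq, ← hu]
      · refine ⟨u, ⟨hD, fun hu => he.ne (hu.trans hv.symm)⟩, ?_⟩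
        show s(c (φ u), u) = s(u, v)
        rw [← hv, Sym2.eq_swap]
  · rintro ⟨x, ⟨hxD, hxc⟩, rfl⟩
    exact ⟨(hcadj _ hxD x).2 ⟨rfl, hxc⟩, Sym2.mk_isDiag_iff.2 (hcD _ hxD)⟩

lemma injOn_centre_edge (hcD : ∀ i ∈ D, φ (c i) = i) :
    Set.InjOn (fun x => s(c (φ x), x)) {x | φ x ∈ D ∧ x ≠ c (φ x)} := by
  rintro x ⟨hxD, -⟩ y ⟨-, hyc⟩ h
  rcases Sym2.eq_iff.1 h with ⟨-, h⟩ | ⟨h1, -⟩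
  · exact h
  · have hφ : φ y = φ x := by rw [← h1, hcD _ hxD]
    exact (hyc (by rw [hφ, h1])).elim

lemma ncard_setOf_ne_centre [Fintype V] [DecidableEq α] (hcD : ∀ i ∈ D, φ (c i) = i)
    (hcard3 : ∀ i ∈ D, (Finset.univ.filter fun w : V => φ w = i).card = 3) :
    {x | φ x ∈ D ∧ x ≠ c (φ x)}.ncard = 2 * D.card := by
  classical
  rw [Set.ncard_eq_toFinset_card', Set.toFinset_ofPred,
    Finset.card_eq_sum_card_fiberwise (f := φ) (t := D) fun x hx => (Finset.mem_filter.1 hx).2.1,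
    Finset.sum_congr rfl (g := fun _ => 2), Finset.sum_const, smul_eq_mul, mul_comm]
  intro i hi
  have hfiber : (Finset.univ.filter fun x => φ x ∈ D ∧ x ≠ c (φ x)).filter (φ · = i) =
      (Finset.univ.filter fun w => φ w = i).erase (c i) := by
    ext x
    simp only [Finset.mem_filter, Finset.mem_univ, true_and, Finset.mem_erase]
    constructor
    · rintro ⟨⟨-, hxc⟩, rfl⟩
      exact ⟨hxc, rfl⟩
    · rintro ⟨hxc, rfl⟩
      exact ⟨⟨hi, hxc⟩, rfl⟩
  rw [hfiber, Finset.card_erase_of_mem (by simpa using hcD i hi), hcard3 i hi]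

lemma ncard_fiberEdges [Fintype V] [DecidableEq α]
    (hinj : ∀ i ∉ D, ∀ u v : V, φ u = i → φ v = i → u = v)
    (hcD : ∀ i ∈ D, φ (c i) = i)
    (hcard3 : ∀ i ∈ D, (Finset.univ.filter fun w : V => φ w = i).card = 3)
    (hcadj : ∀ i ∈ D, ∀ w : V, G.Adj (c i) w ↔ (φ w = i ∧ w ≠ c i))
    (hwithin : ∀ u v : V, φ u = φ v → G.Adj u v → (u = c (φ u) ∨ v = c (φ u))) :
    (G.fiberEdges φ).ncard = 2 * D.card := by
  rw [fiberEdges_eq_image hinj hcD hcadj hwithin, (injOn_centre_edge hcD).ncard_image,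
    ncard_setOf_ne_centre hcD hcard3]

end StretchedClique

/-- if `G ∈ 𝒦_{n,d}` has `ω(G) ≥ 3`, then `G` has an edge subgraph
`H ∈ 𝒦_{n,d}` with `|E(H)| = n(n−1)/2 + 2d` and `ω(H) = ω(G)`. -/
theorem stmt_11 {W : Type} [Fintype W] (n d : ℕ) (G : SimpleGraph W)
    (hG : IsStretchedClique n d G) (hω : 3 ≤ cliqueNum G) :
    ∃ H : SimpleGraph W, H ≤ G ∧ IsStretchedClique n d H ∧
      H.edgeSet.ncard = n * (n - 1) / 2 + 2 * d ∧ cliqueNum H = cliqueNum G := by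
  obtain ⟨φ, c, D, hD, hsurj, hinj, hcD, hcard3, hcadj, hwithin, hcross⟩ := hG
  obtain ⟨S, hS⟩ := G.exists_isNClique_cliqueNum
  have hSinj : Set.InjOn φ S := hS.isClique.injOn_of_three_le
    (fun _ _ _ => map_ne_of_triangle hinj hcadj hwithin) (hS.card_eq.trans_ge hω)
  obtain ⟨pick, hpick, hSpick⟩ := SimpleGraph.exists_pick_of_isClique hcross hS.isClique hSinj
  have hHG : G.restrictCrossEdges φ pick ≤ G :=
    SimpleGraph.restrictCrossEdges_le fun p => (hpick p).1
  refine ⟨G.restrictCrossEdges φ pick, hHG, ⟨φ, c, D, hD, hsurj, hinj, hcD, hcard3,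
    fun i hi w => ⟨fun h => (hcadj i hi w).1 (hHG h),
      fun h => SimpleGraph.restrictCrossEdges_adj_of_eq ((hcadj i hi w).2 h)
        (by rw [hcD i hi, h.1])⟩,
    fun u v huv h => hwithin u v huv (hHG h),
    fun i j => SimpleGraph.exists_adj_restrictCrossEdges hpick⟩, ?_, ?_⟩
  · rw [SimpleGraph.ncard_edgeSet_restrictCrossEdges hpick,
      ncard_fiberEdges hinj hcD hcard3 hcadj hwithin, Fintype.card_fin, Nat.choose_two_right,
      hD, add_comm]
  · exact SimpleGraph.cliqueNum_eq_of_le_of_isClique hHG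
      (fun u hu v hv huv =>
        SimpleGraph.restrictCrossEdges_adj_of_mem_range (hSpick u hu v hv huv) huv) hS.card_eq
end
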